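/- The class of languages accepted by quasi-deterministic all-final simple (qDFS) sensing 5'→3' WK automata properly includes the class of languages accepted by quasi-deterministic all-final 1-limited (qDF1) sensing 5'→3' WK automata: every qDF1 automaton is a qDFS automaton, and the language { a²ⁿb²ⁿ : n ≥ 0 } ∪ { a²⁽ⁿ⁺¹⁾b²ⁿ : n ≥ 0 } is accepted by a qDFS sensing 5'→3' WK automaton but by no qDF1 sensing 5'→3' WK automaton (since in an all-final 1-limited automaton an accepting computation on a word of length k yields accepted words of every length up to k, yet this language contains a word of length 2 but none of length 1). -/

import Mathlib

open Computability

/-- The two-letter alphabet `{a, b}`. -/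
inductive Letter : Type
  | a : Letter
  | b : Letter
deriving DecidableEq

instance : Fintype Letter :=
  ⟨{Letter.a, Letter.b}, fun x => by cases x <;> simp⟩

open Letter

/-- A sensing 5'→3' Watson-Crick automaton over the alphabet `T` with state set `Q`:
an initial state `q0`, a set `F` of final states, and a transition mapping
`δ : Q × T* × T* → 2^Q` that is nonempty for only finitely many triples. -/
structure WKAutomaton (T : Type) (Q : Type) where
  q0 : Q
  F : Set Q
  δ : Q → List T → List T → Set Q
  finite_delta : {t : Q × List T × List T | (δ t.1 t.2.1 t.2.2).Nonempty}.Finite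

namespace WKAutomaton

variable {T Q : Type}

/-- One computation step on configurations:
`(q, x ++ w' ++ y) ⇒ (q', w')` iff `q' ∈ δ q x y`. -/
def Step (A : WKAutomaton T Q) (c c' : Q × List T) : Prop :=
  ∃ x y : List T, c.2 = x ++ c'.2 ++ y ∧ c'.1 ∈ A.δ c.1 x y

/-- The accepted language: words `w` with `(q₀, w) ⇒* (q_F, λ)` for some final `q_F`. -/
def Lang (A : WKAutomaton T Q) : Set (List T) :=
  {w | ∃ qf ∈ A.F, Relation.ReflTransGen A.Step (A.q0, w) (qf, [])}

/-- `A` is deterministic: in every configuration at most one computation step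
(choice of `x`, `y`, `w'`, `q'`) is applicable. -/
def Deterministic (A : WKAutomaton T Q) : Prop :=
  ∀ (q : Q) (w x₁ y₁ w₁ x₂ y₂ w₂ : List T) (q₁ q₂ : Q),
    w = x₁ ++ w₁ ++ y₁ → q₁ ∈ A.δ q x₁ y₁ →
    w = x₂ ++ w₂ ++ y₂ → q₂ ∈ A.δ q x₂ y₂ →
    x₁ = x₂ ∧ y₁ = y₂ ∧ w₁ = w₂ ∧ q₁ = q₂

/-- `A` is quasi-deterministic: for every configuration `(q,w)`, whenever
`(q,w) ⇒ (p,u)` and `(q,w) ⇒ (r,v)`, it holds that `p = r`. -/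
def QuasiDet (A : WKAutomaton T Q) : Prop :=
  ∀ (q : Q) (w : List T) (p r : Q) (u v : List T),
    A.Step (q, w) (p, u) → A.Step (q, w) (r, v) → p = r

/-- `A` is state-deterministic: for every state `q` there is at most one state `p`
with `p ∈ δ(q,u,v)` for some words `u`, `v`. -/
def StateDet (A : WKAutomaton T Q) : Prop :=
  ∀ (q p₁ p₂ : Q) (u₁ v₁ u₂ v₂ : List T),
    p₁ ∈ A.δ q u₁ v₁ → p₂ ∈ A.δ q u₂ v₂ → p₁ = p₂

/-- `A` is stateless: `Q = F = {q₀}`. -/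
def Stateless (A : WKAutomaton T Q) : Prop :=
  (∀ q : Q, q = A.q0) ∧ A.F = {A.q0}

/-- `A` is all-final: `Q = F`. -/
def AllFinal (A : WKAutomaton T Q) : Prop := A.F = Set.univ

/-- `A` is simple: at most one head reads in each step. -/
def Simple (A : WKAutomaton T Q) : Prop :=
  ∀ (q : Q) (u v : List T), (A.δ q u v).Nonempty → u = [] ∨ v = []

/-- `A` is 1-limited: exactly one letter is read in each step. -/
def OneLimited (A : WKAutomaton T Q) : Prop :=
  ∀ (q : Q) (u v : List T), (A.δ q u v).Nonempty →
    (u = [] ∧ v.length = 1) ∨ (u.length = 1 ∧ v = [])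

end WKAutomaton

/-- Equality of languages modulo the empty word. -/
def EqModLambda {T : Type} (L₁ L₂ : Set (List T)) : Prop :=
  ∀ w : List T, w ≠ [] → (w ∈ L₁ ↔ w ∈ L₂)

/-- `L` is accepted (modulo the empty word) by some sensing 5'→3' WK automaton
with a finite state set satisfying the property `P`. -/
def AcceptsWith (T : Type) (P : ∀ Q : Type, WKAutomaton T Q → Prop)
    (L : Set (List T)) : Prop :=
  ∃ (Q : Type) (_ : Finite Q) (A : WKAutomaton T Q), P Q A ∧ EqModLambda A.Lang L

/-- The language `{ a²ⁿb²ⁿ : n ≥ 0 } ∪ { a²⁽ⁿ⁺¹⁾b²ⁿ : n ≥ 0 }`. -/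
def Leven : Set (List Letter) :=
  {w | (∃ n : ℕ, w = List.replicate (2 * n) a ++ List.replicate (2 * n) b) ∨
       (∃ n : ℕ, w = List.replicate (2 * (n + 1)) a ++ List.replicate (2 * n) b)}

/-
A 1-limited automaton is simple, which gives the inclusion. For properness: in an all-final
automaton the first transition of an accepting computation already reads an accepted word, and in
a 1-limited automaton that word has length one. The language contains `aa` but no word of odd
length, so no all-final 1-limited automaton accepts it, while a two-state automaton that
alternately reads `aa` from the left and `bb` from the right does.
-/

namespace WKAutomaton

variable {T Q : Type} {A : WKAutomaton T Q}

theorem OneLimited.simple (hA : A.OneLimited) : A.Simple := fun q u v hne =>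
  (hA q u v hne).imp And.left And.right

theorem StateDet.quasiDet (hA : A.StateDet) : A.QuasiDet :=
  fun _ _ _ _ _ _ ⟨_, _, _, hp⟩ ⟨_, _, _, hr⟩ => hA _ _ _ _ _ _ _ hp hr

theorem AllFinal.append_mem_lang (hA : A.AllFinal) {p : Q} {x y : List T}
    (h : p ∈ A.δ A.q0 x y) : x ++ y ∈ A.Lang :=
  ⟨p, hA ▸ Set.mem_univ p, .single ⟨x, y, by simp, h⟩⟩

theorem OneLimited.length_append {q p : Q} {x y : List T} (hA : A.OneLimited)
    (h : p ∈ A.δ q x y) : (x ++ y).length = 1 := by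
  rcases hA q x y ⟨p, h⟩ with ⟨rfl, hy⟩ | ⟨hx, rfl⟩ <;> simpa

theorem exists_length_eq_one_mem_lang (hF : A.AllFinal) (h1 : A.OneLimited) {w : List T}
    (hw : w ∈ A.Lang) (hne : w ≠ []) : ∃ v ∈ A.Lang, v.length = 1 := by
  obtain ⟨_, _, hcomp⟩ := hw
  rcases hcomp.cases_head with heq | ⟨_, ⟨x, y, -, hxy⟩, -⟩
  · exact absurd (congrArg Prod.snd heq) hne
  · exact ⟨x ++ y, hF.append_mem_lang hxy, h1.length_append hxy⟩

end WKAutomaton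

theorem AcceptsWith.mono {T : Type} {P P' : ∀ Q : Type, WKAutomaton T Q → Prop}
    (h : ∀ Q A, P Q A → P' Q A) {L : Set (List T)} (hL : AcceptsWith T P L) :
    AcceptsWith T P' L :=
  let ⟨Q, hQ, A, hA, hAL⟩ := hL
  ⟨Q, hQ, A, h Q A hA, hAL⟩

namespace Leven

def word (m n : ℕ) : List Letter := List.replicate (2 * m) a ++ List.replicate (2 * n) b

theorem aa_append_word (m n : ℕ) : [a, a] ++ word m n = word (m + 1) n := by
  simp [word, Nat.mul_succ, List.replicate_succ]

theorem word_append_bb (m n : ℕ) : word m n ++ [b, b] = word m (n + 1) := by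
  simp [word, Nat.mul_succ, List.replicate_succ']

theorem even_length {w : List Letter} (hw : w ∈ Leven) : Even w.length := by
  rcases hw with ⟨n, rfl⟩ | ⟨n, rfl⟩ <;> simp [← two_mul, ← mul_add]

def automaton : WKAutomaton Letter Bool where
  q0 := false
  F := Set.univ
  δ q x y := {p | (q = false ∧ x = [a, a] ∧ y = [] ∧ p = true) ∨
                  (q = true ∧ x = [] ∧ y = [b, b] ∧ p = false)}
  finite_delta := by
    refine (Set.toFinite {(false, [a, a], []), (true, [], [b, b])}).subset ?_
    rintro ⟨q, x, y⟩ ⟨p, ⟨rfl, rfl, rfl, -⟩ | ⟨rfl, rfl, rfl, -⟩⟩ <;> simp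

theorem step_iff {c c' : Bool × List Letter} :
    automaton.Step c c' ↔
      (c.1 = false ∧ c'.1 = true ∧ c.2 = [a, a] ++ c'.2) ∨
      (c.1 = true ∧ c'.1 = false ∧ c.2 = c'.2 ++ [b, b]) := by
  obtain ⟨q, w⟩ := c
  obtain ⟨p, u⟩ := c'
  constructor
  · rintro ⟨x, y, hw, ⟨rfl, rfl, rfl, rfl⟩ | ⟨rfl, rfl, rfl, rfl⟩⟩ <;> simp_all
  · rintro (⟨rfl, rfl, rfl⟩ | ⟨rfl, rfl, rfl⟩)
    exacts [⟨[a, a], [], by simp, Or.inl ⟨rfl, rfl, rfl, rfl⟩⟩,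
      ⟨[], [b, b], by simp, Or.inr ⟨rfl, rfl, rfl, rfl⟩⟩]

theorem stateDet : automaton.StateDet := by
  rintro q p₁ p₂ u₁ v₁ u₂ v₂ (⟨rfl, -, -, rfl⟩ | ⟨rfl, -, -, rfl⟩)
    (⟨h, -, -, rfl⟩ | ⟨h, -, -, rfl⟩) <;> simp_all

theorem simple : automaton.Simple := by
  rintro q u v ⟨p, ⟨-, -, h, -⟩ | ⟨-, h, -, -⟩⟩
  exacts [Or.inr h, Or.inl h]

theorem step_word_false (m n : ℕ) : automaton.Step (false, word (m + 1) n) (true, word m n) :=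
  step_iff.2 (.inl ⟨rfl, rfl, (aa_append_word m n).symm⟩)

theorem step_word_true (m n : ℕ) : automaton.Step (true, word m (n + 1)) (false, word m n) :=
  step_iff.2 (.inr ⟨rfl, rfl, (word_append_bb m n).symm⟩)

theorem reaches_word_self (q : Bool) (n : ℕ) :
    Relation.ReflTransGen automaton.Step (q, word n n) (q, []) := by
  induction n with
  | zero => exact .refl
  | succ n ih =>
    cases q
    · exact .head (step_word_false n (n + 1)) (.head (step_word_true n n) ih)
    · exact .head (step_word_true (n + 1) n) (.head (step_word_false n n) ih)

def langFrom : Bool → Set (List Letter)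
  | false => Leven
  | true => {w | (∃ n, w = word n n) ∨ ∃ n, w = word n (n + 1)}

theorem aa_append_mem_langFrom {w : List Letter} (hw : w ∈ langFrom true) :
    [a, a] ++ w ∈ langFrom false := by
  rcases hw with ⟨n, rfl⟩ | ⟨n, rfl⟩
  exacts [Or.inr ⟨n, aa_append_word n n⟩, Or.inl ⟨n + 1, aa_append_word n (n + 1)⟩]

theorem append_bb_mem_langFrom {w : List Letter} (hw : w ∈ langFrom false) :
    w ++ [b, b] ∈ langFrom true := by
  rcases hw with ⟨n, rfl⟩ | ⟨n, rfl⟩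
  exacts [Or.inr ⟨n, word_append_bb n n⟩, Or.inl ⟨n + 1, word_append_bb (n + 1) n⟩]

theorem mem_langFrom_of_reaches {c : Bool × List Letter} {p : Bool}
    (h : Relation.ReflTransGen automaton.Step c (p, [])) : c.2 ∈ langFrom c.1 := by
  induction h using Relation.ReflTransGen.head_induction_on with
  | refl => cases p <;> exact Or.inl ⟨0, rfl⟩
  | head hstep _ ih =>
    rcases step_iff.1 hstep with ⟨hc, hc', hw⟩ | ⟨hc, hc', hw⟩ <;> rw [hc, hw] <;> rw [hc'] at ih
    exacts [aa_append_mem_langFrom ih, append_bb_mem_langFrom ih]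

theorem lang_automaton : automaton.Lang = Leven := by
  ext w
  constructor
  · rintro ⟨_, -, h⟩
    exact mem_langFrom_of_reaches h
  · rintro (⟨n, rfl⟩ | ⟨n, rfl⟩)
    · exact ⟨false, trivial, reaches_word_self false n⟩
    · exact ⟨true, trivial, .head (step_word_false n n) (reaches_word_self true n)⟩

theorem not_acceptsWith_allFinal_oneLimited :
    ¬ AcceptsWith Letter (fun _ A => A.AllFinal ∧ A.OneLimited) Leven := by
  rintro ⟨Q, -, A, ⟨hF, h1⟩, hAL⟩
  have haa : [a, a] ∈ A.Lang := (hAL _ (by simp)).2 (Or.inr ⟨0, rfl⟩)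
  obtain ⟨v, hv, hlen⟩ := A.exists_length_eq_one_mem_lang hF h1 haa (by simp)
  have hv_even := even_length ((hAL v (List.ne_nil_of_length_pos (by omega))).1 hv)
  exact Nat.not_even_one (hlen ▸ hv_even)

end Leven

/-- The class of languages accepted by quasi-deterministic all-final simple (qDFS)
sensing 5'→3' WK automata properly includes the class of languages accepted by
quasi-deterministic all-final 1-limited (qDF1) sensing 5'→3' WK automata:
every 1-limited automaton is simple (so every qDF1 automaton is a qDFS
automaton), and `{ a²ⁿb²ⁿ } ∪ { a²⁽ⁿ⁺¹⁾b²ⁿ }` is accepted by a qDFS sensing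
5'→3' WK automaton but by no qDF1 sensing 5'→3' WK automaton. -/
theorem qDF1_proper_subset_qDFS :
    (∀ (T Q : Type) (A : WKAutomaton T Q), A.OneLimited → A.Simple) ∧
    (∀ (T : Type) (L : Set (List T)),
      AcceptsWith T (fun _ A => A.QuasiDet ∧ A.AllFinal ∧ A.OneLimited) L →
      AcceptsWith T (fun _ A => A.QuasiDet ∧ A.AllFinal ∧ A.Simple) L) ∧
    AcceptsWith Letter (fun _ A => A.QuasiDet ∧ A.AllFinal ∧ A.Simple) Leven ∧
    ¬ AcceptsWith Letter (fun _ A => A.QuasiDet ∧ A.AllFinal ∧ A.OneLimited) Leven := by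
  refine ⟨fun _ _ _ => WKAutomaton.OneLimited.simple, ?_, ?_, ?_⟩
  · exact fun _ _ => AcceptsWith.mono fun _ _ ⟨hq, hF, h1⟩ => ⟨hq, hF, h1.simple⟩
  · exact ⟨Bool, inferInstance, Leven.automaton,
      ⟨Leven.stateDet.quasiDet, rfl, Leven.simple⟩, fun w _ => by rw [Leven.lang_automaton]⟩
  · exact fun h => Leven.not_acceptsWith_allFinal_oneLimited (h.mono fun _ _ h => h.2)
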